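/- Let 𝓛 be a finite-dimensional nilpotent Lie algebra over a field k and M a one-dimensional 𝓛-module given by a nonzero character χ : 𝓛 → k (necessarily vanishing on [𝓛,𝓛]). Then the Lie algebra cohomology H^i(𝓛, M) vanishes for all i ≥ 0. -/

import Mathlib

set_option linter.unusedSectionVars false

section CE
variable (k L M : Type*) [CommRing k] [LieRing L] [LieAlgebra k L]
  [AddCommGroup M] [Module k M] [LieRingModule L M] [LieModule k L M]

/-- The Chevalley–Eilenberg differential on alternating cochains, as a raw function:
`(df)(x₀,…,xₙ) = ∑ᵢ (-1)ⁱ ⁅xᵢ, f(…x̂ᵢ…)⁆ + ∑_{p<q} (-1)^{p+q} f(⁅xₚ,x_q⁆, …x̂ₚ…x̂_q…)`,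
the second sum written via `Function.update` (placing `⁅xₚ,x_q⁆` in the slot of `x_q`,
with the matching sign `(-1)^{p+1}`). -/
noncomputable def ceDiffFun (n : ℕ) (f : AlternatingMap k L M (Fin n))
    (x : Fin (n + 1) → L) : M :=
  (∑ i : Fin (n + 1), ((-1 : ℤ) ^ (i : ℕ)) • ⁅x i, f fun j => x (i.succAbove j)⁆) +
    ∑ p : Fin (n + 1), ∑ q : Fin (n + 1),
      if h : p < q then
        ((-1 : ℤ) ^ ((p : ℕ) + 1)) •
          f (Function.update (fun j => x (p.succAbove j))
              (q.pred (Fin.pos_iff_ne_zero.mp (lt_of_le_of_lt (Fin.zero_le p) h)))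
              ⁅x p, x q⁆)
      else 0

theorem ceDiffFun_add (n : ℕ) (f g : AlternatingMap k L M (Fin n)) (x : Fin (n + 1) → L) :
    ceDiffFun k L M n (f + g) x = ceDiffFun k L M n f x + ceDiffFun k L M n g x := by
  have key : ∀ (P : Prop) [Decidable P] (a b : P → M),
      (if h : P then a h + b h else 0) =
        (if h : P then a h else 0) + (if h : P then b h else 0) := by
    intro P _ a b; split <;> simp
  simp only [ceDiffFun, AlternatingMap.add_apply, lie_add, smul_add, key,
    Finset.sum_add_distrib]
  abel

theorem ceDiffFun_smul (n : ℕ) (c : k) (f : AlternatingMap k L M (Fin n))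
    (x : Fin (n + 1) → L) :
    ceDiffFun k L M n (c • f) x = c • ceDiffFun k L M n f x := by
  have key : ∀ (P : Prop) [Decidable P] (a : P → M),
      (if h : P then c • a h else 0) = c • (if h : P then a h else 0) := by
    intro P _ a; split <;> simp
  simp only [ceDiffFun, AlternatingMap.smul_apply, lie_smul, smul_comm _ c, key,
    Finset.smul_sum, smul_add]

theorem ceDiffFun_zero (n : ℕ) (x : Fin (n + 1) → L) :
    ceDiffFun k L M n (0 : AlternatingMap k L M (Fin n)) x = 0 := by
  simp [ceDiffFun]

/-- Chevalley–Eilenberg `n`-cocycles. -/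
noncomputable def ceZ (n : ℕ) : Submodule k (AlternatingMap k L M (Fin n)) where
  carrier := {f | ∀ x, ceDiffFun k L M n f x = 0}
  add_mem' := by
    intro f g hf hg x
    rw [ceDiffFun_add, hf, hg, add_zero]
  zero_mem' := by
    intro x; exact ceDiffFun_zero k L M n x
  smul_mem' := by
    intro c f hf x
    rw [ceDiffFun_smul, hf, smul_zero]

/-- Chevalley–Eilenberg `n`-coboundaries. -/
noncomputable def ceB : (n : ℕ) → Submodule k (AlternatingMap k L M (Fin n))
  | 0 => ⊥
  | n + 1 =>
    { carrier := {f | ∃ g : AlternatingMap k L M (Fin n), ∀ x, f x = ceDiffFun k L M n g x}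
      add_mem' := by
        rintro f f' ⟨g, hg⟩ ⟨g', hg'⟩
        exact ⟨g + g', fun x => by
          rw [AlternatingMap.add_apply, hg, hg', ceDiffFun_add]⟩
      zero_mem' :=
        ⟨0, fun x => by rw [AlternatingMap.zero_apply, ceDiffFun_zero]⟩
      smul_mem' := by
        rintro c f ⟨g, hg⟩
        exact ⟨c • g, fun x => by
          rw [AlternatingMap.smul_apply, hg, ceDiffFun_smul]⟩ }

/-- Chevalley–Eilenberg Lie algebra cohomology `H^n(L, M)`:
cocycles modulo coboundaries. -/
abbrev ceH (n : ℕ) :=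
  ↥(ceZ k L M n) ⧸ Submodule.comap (ceZ k L M n).subtype (ceB k L M n)

end CE

/-!
Fix `x₀` with `χ x₀ ≠ 0` and let `θ` be the derivation action of `ad x₀` on the arguments of
cochains. By Cartan's formula `d ι_{x₀} + ι_{x₀} d = ⁅x₀, ·⁆ - θ`, and `⁅x₀, ·⁆` is the scalar
`χ x₀` on `M`, so `χ x₀ • f - θ f` is a coboundary for every cocycle `f`. Because `χ` kills
commutators, the image of `ad x₀` acts trivially on `M`, which makes `θ` commute with `d`; so `θ`
preserves cocycles, and iterating gives that `(χ x₀) ^ m • f - θ ^ m f` is a coboundary for all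
`m`. Finally `ad x₀` is nilpotent, hence so is `θ`, and `f` itself is a coboundary.
-/

open Function

theorem Fin.cons_succ_succAbove {α : Type*} {n : ℕ} (x₀ : α) (y : Fin (n + 1) → α)
    (i : Fin (n + 1)) :
    (fun j => (Fin.cons x₀ y : Fin (n + 2) → α) (i.succ.succAbove j)) =
      Fin.cons x₀ fun j => y (i.succAbove j) :=
  Fin.cons_comp_succ_succAbove x₀ y i

theorem Submodule.le_of_isNilpotent_of_smul_sub_mem {R V : Type*} [CommRing R] [AddCommGroup V]
    [Module R V] {Z B : Submodule R V} {T : Module.End R V} {c : R} (hc : IsUnit c)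
    (hT : IsNilpotent T) (hTZ : ∀ v ∈ Z, T v ∈ Z) (hZB : ∀ v ∈ Z, c • v - T v ∈ B) :
    Z ≤ B := by
  have hpowZ : ∀ j, ∀ v ∈ Z, (T ^ j) v ∈ Z := by
    intro j
    induction j with
    | zero => exact fun v hv => hv
    | succ j ih => exact fun v hv => by rw [pow_succ', Module.End.mul_apply]; exact hTZ _ (ih v hv)
  have hpowB : ∀ j, ∀ v ∈ Z, c ^ j • v - (T ^ j) v ∈ B := by
    intro j
    induction j with
    | zero => simp
    | succ j ih =>
      intro v hv
      have hsplit : c ^ (j + 1) • v - (T ^ (j + 1)) v =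
          c • (c ^ j • v - (T ^ j) v) + (c • (T ^ j) v - T ((T ^ j) v)) := by
        rw [pow_succ', pow_succ', Module.End.mul_apply, smul_sub, smul_smul]
        abel
      rw [hsplit]
      exact B.add_mem (B.smul_mem c (ih v hv)) (hZB _ (hpowZ j v hv))
  obtain ⟨m, hm⟩ := hT
  intro v hv
  have := hpowB m v hv
  rwa [hm, LinearMap.zero_apply, sub_zero, Submodule.smul_mem_iff_of_isUnit B (hc.pow m)] at this

namespace MultilinearMap

variable {R N M ι : Type*} [CommRing R] [AddCommGroup N] [Module R N] [AddCommGroup M]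
  [Module R M] [DecidableEq ι]

noncomputable def compAt (r : ι) (φ : N →ₗ[R] N) :
    Module.End R (MultilinearMap R (fun _ : ι => N) M) :=
  compLinearMapₗ (update (fun _ => LinearMap.id) r φ)

theorem compAt_apply (r : ι) (φ : N →ₗ[R] N) (f : MultilinearMap R (fun _ : ι => N) M)
    (w : ι → N) : compAt r φ f w = f (update w r (φ (w r))) := by
  refine congrArg f (funext fun s => ?_)
  rcases eq_or_ne s r with rfl | h <;> simp [update_of_ne, *]

theorem compAt_mul (r : ι) (φ ψ : N →ₗ[R] N) :
    compAt (M := M) r φ * compAt r ψ = compAt r (ψ * φ) := by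
  ext f w
  simp [compAt_apply]

theorem commute_compAt (r s : ι) (φ : N →ₗ[R] N) :
    Commute (compAt (M := M) r φ) (compAt s φ) := by
  ext f w
  rcases eq_or_ne r s with rfl | h
  · rfl
  · simp [compAt_apply, update_of_ne, h, h.symm, update_comm h]

theorem isNilpotent_compAt (r : ι) {φ : N →ₗ[R] N} (hφ : IsNilpotent φ) :
    IsNilpotent (compAt (M := M) r φ) := by
  obtain ⟨n, hn⟩ := hφ
  have hpow : ∀ m, compAt (M := M) r φ ^ m = compAt r (φ ^ m) := by
    intro m
    induction m with
    | zero => ext; simp [compAt_apply]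
    | succ m ih => rw [pow_succ, ih, compAt_mul, pow_succ']
  exact ⟨n, by ext; simp [hpow, hn, compAt_apply]⟩

variable [Fintype ι]

noncomputable def derivComp (φ : N →ₗ[R] N) :
    Module.End R (MultilinearMap R (fun _ : ι => N) M) :=
  ∑ r, compAt r φ

theorem derivComp_apply (φ : N →ₗ[R] N) (f : MultilinearMap R (fun _ : ι => N) M) (w : ι → N) :
    derivComp φ f w = ∑ r, f (update w r (φ (w r))) := by
  simp only [derivComp, LinearMap.sum_apply, sum_apply, compAt_apply]

theorem isNilpotent_derivComp {φ : N →ₗ[R] N} (hφ : IsNilpotent φ) :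
    IsNilpotent (derivComp (M := M) (ι := ι) φ) :=
  Commute.isNilpotent_sum (fun r _ => isNilpotent_compAt r hφ)
    fun r s _ _ => commute_compAt r s φ

end MultilinearMap

namespace AlternatingMap

variable {R N M ι : Type*} [CommRing R] [AddCommGroup N] [Module R N] [AddCommGroup M]
  [Module R M] [Fintype ι] [DecidableEq ι]

theorem derivComp_map_eq_zero_of_eq (φ : N →ₗ[R] N) (f : AlternatingMap R N M ι) {w : ι → N}
    {a b : ι} (hw : w a = w b) (hab : a ≠ b) :
    MultilinearMap.derivComp φ f.toMultilinearMap w = 0 := by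
  rw [MultilinearMap.derivComp_apply, Fintype.sum_eq_add a b hab]
  · have hswap : update w a (φ (w a)) ∘ Equiv.swap a b = update w b (φ (w b)) := by
      rw [update_comp_equiv, Equiv.symm_swap, Equiv.swap_apply_left, hw]
      congr 1
      ext i
      rcases eq_or_ne i a with rfl | hia
      · simp [hw]
      rcases eq_or_ne i b with rfl | hib
      · simp [hw]
      · simp [Equiv.swap_apply_of_ne_of_ne hia hib]
    rw [coe_multilinearMap, ← hswap, map_swap _ _ hab, add_neg_cancel]
  · rintro r ⟨hra, hrb⟩
    exact f.map_eq_zero_of_eq _ (by simpa [update_of_ne, hra.symm, hrb.symm]) hab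

noncomputable def derivComp (φ : N →ₗ[R] N) : Module.End R (AlternatingMap R N M ι) where
  toFun f := { MultilinearMap.derivComp φ f.toMultilinearMap with
    map_eq_zero_of_eq' := fun _ _ _ => derivComp_map_eq_zero_of_eq φ f }
  map_add' f g := by ext; simp [MultilinearMap.derivComp_apply, Finset.sum_add_distrib]
  map_smul' c f := by ext; simp [MultilinearMap.derivComp_apply, Finset.smul_sum]

theorem derivComp_apply (φ : N →ₗ[R] N) (f : AlternatingMap R N M ι) (w : ι → N) :
    derivComp φ f w = ∑ r, f (update w r (φ (w r))) :=
  MultilinearMap.derivComp_apply φ f.toMultilinearMap w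

theorem toMultilinearMap_derivComp (φ : N →ₗ[R] N) (f : AlternatingMap R N M ι) :
    (derivComp φ f).toMultilinearMap = MultilinearMap.derivComp φ f.toMultilinearMap :=
  rfl

theorem isNilpotent_derivComp {φ : N →ₗ[R] N} (hφ : IsNilpotent φ) :
    IsNilpotent (derivComp (M := M) (ι := ι) φ) := by
  obtain ⟨n, hn⟩ := MultilinearMap.isNilpotent_derivComp (M := M) (ι := ι) hφ
  refine ⟨n, LinearMap.ext fun f => coe_multilinearMap_injective ?_⟩
  have hpow : ∀ m, ((derivComp φ ^ m) f).toMultilinearMap =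
      (MultilinearMap.derivComp φ ^ m) f.toMultilinearMap := by
    intro m
    induction m with
    | zero => rfl
    | succ m ih =>
      rw [pow_succ', pow_succ', Module.End.mul_apply, toMultilinearMap_derivComp, ih]
      rfl
  rw [hpow, hn]
  rfl

end AlternatingMap

section Cochains

variable {k L M : Type*} [CommRing k] [LieRing L] [LieAlgebra k L] [AddCommGroup M] [Module k M]

noncomputable def ceDiffBrTerm (n : ℕ) (f : AlternatingMap k L M (Fin n)) (x : Fin (n + 1) → L)
    (p q : Fin (n + 1)) : M :=
  if h : p < q then
    ((-1 : ℤ) ^ ((p : ℕ) + 1)) •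
      f (update (fun j => x (p.succAbove j))
          (q.pred (Fin.pos_iff_ne_zero.mp (lt_of_le_of_lt (Fin.zero_le p) h))) ⁅x p, x q⁆)
  else 0

noncomputable def ceDiffBr (n : ℕ) (f : AlternatingMap k L M (Fin n)) (x : Fin (n + 1) → L) :
    M :=
  ∑ p, ∑ q, ceDiffBrTerm n f x p q

theorem ceDiffBrTerm_zero_right (n : ℕ) (f : AlternatingMap k L M (Fin n))
    (x : Fin (n + 1) → L) (p : Fin (n + 1)) : ceDiffBrTerm n f x p 0 = 0 :=
  dif_neg (Fin.not_lt_zero p)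

theorem ceDiffBrTerm_cons_zero_succ (n : ℕ) (f : AlternatingMap k L M (Fin (n + 1))) (x₀ : L)
    (y : Fin (n + 1) → L) (q : Fin (n + 1)) :
    ceDiffBrTerm (n + 1) f (Fin.cons x₀ y) 0 q.succ = -f (update y q ⁅x₀, y q⁆) := by
  simp [ceDiffBrTerm]

theorem ceDiffBrTerm_cons_succ_succ (n : ℕ) (f : AlternatingMap k L M (Fin (n + 1))) (x₀ : L)
    (y : Fin (n + 1) → L) (p q : Fin (n + 1)) :
    ceDiffBrTerm (n + 1) f (Fin.cons x₀ y) p.succ q.succ =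
      -ceDiffBrTerm n (f.curryLeft x₀) y p q := by
  unfold ceDiffBrTerm
  by_cases h : p < q
  · rw [dif_pos (Fin.succ_lt_succ_iff.mpr h), dif_pos h, Fin.cons_succ_succAbove, Fin.pred_succ,
      Fin.cons_succ, Fin.cons_succ, AlternatingMap.curryLeft_apply_apply, Matrix.vecCons,
      Fin.cons_update, Fin.succ_pred, Fin.val_succ, pow_succ (-1 : ℤ) (p + 1), mul_neg_one, neg_smul]
  · rw [dif_neg (mt Fin.succ_lt_succ_iff.mp h), dif_neg h, neg_zero]

theorem ceDiffBr_cons (n : ℕ) (f : AlternatingMap k L M (Fin (n + 1))) (x₀ : L)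
    (y : Fin (n + 1) → L) :
    ceDiffBr (n + 1) f (Fin.cons x₀ y) =
      -AlternatingMap.derivComp (LieAlgebra.ad k L x₀) f y - ceDiffBr n (f.curryLeft x₀) y := by
  simp only [ceDiffBr, Fin.sum_univ_succ (n := n + 1), ceDiffBrTerm_zero_right,
    ceDiffBrTerm_cons_zero_succ, ceDiffBrTerm_cons_succ_succ, AlternatingMap.derivComp_apply,
    Finset.sum_neg_distrib, zero_add, LieAlgebra.ad_apply]
  abel

-- By the Leibniz rule for `D`, the `t`-th summand on the left splits into the summands `i = p` and
-- `i = q` on the right; the remaining summands match one to one.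
theorem derivComp_update_removeNth {n : ℕ} (D : LieDerivation k L L)
    (f : AlternatingMap k L M (Fin n)) (y : Fin (n + 1) → L) (p q : Fin (n + 1)) (t : Fin n)
    (ht : p.succAbove t = q) :
    AlternatingMap.derivComp (D : L →ₗ[k] L) f (update (p.removeNth y) t ⁅y p, y q⁆) =
      ∑ i, f (update (p.removeNth (update y i (D (y i)))) t
        ⁅update y i (D (y i)) p, update y i (D (y i)) q⁆) := by
  subst ht
  rw [AlternatingMap.derivComp_apply, LieDerivation.coeFn_coe, Fin.sum_univ_succAbove _ p,
    ← Finset.add_sum_erase _ _ (Finset.mem_univ t), ← Finset.add_sum_erase _ _ (Finset.mem_univ t)]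
  have hrest : ∀ r ∈ Finset.univ.erase t,
      f (update (update (p.removeNth y) t ⁅y p, y (p.succAbove t)⁆) r
        (D (update (p.removeNth y) t ⁅y p, y (p.succAbove t)⁆ r))) =
      f (update (p.removeNth (update y (p.succAbove r) (D (y (p.succAbove r))))) t
        ⁅update y (p.succAbove r) (D (y (p.succAbove r))) p,
          update y (p.succAbove r) (D (y (p.succAbove r))) (p.succAbove t)⁆) := by
    intro r hr
    have hrt : r ≠ t := Finset.ne_of_mem_erase hr
    simp [update_of_ne hrt, update_comm hrt, (Fin.succAbove_right_injective.ne hrt).symm,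
      Fin.removeNth_apply]
  rw [Finset.sum_congr rfl hrest, update_self, update_idem, D.apply_lie_eq_add,
    AlternatingMap.map_update_add, Fin.removeNth_update, update_self,
    update_of_ne (Fin.succAbove_ne p t), Fin.removeNth_update_succAbove, update_idem,
    update_of_ne (Fin.ne_succAbove p t), update_self]
  abel

theorem ceDiffBrTerm_derivComp (D : LieDerivation k L L) (n : ℕ)
    (f : AlternatingMap k L M (Fin n)) (y : Fin (n + 1) → L) (p q : Fin (n + 1)) :
    ceDiffBrTerm n (AlternatingMap.derivComp (D : L →ₗ[k] L) f) y p q =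
      ∑ i, ceDiffBrTerm n f (update y i (D (y i))) p q := by
  unfold ceDiffBrTerm
  rw [Finset.sum_dite_irrel]
  split_ifs with hpq
  · rw [← Finset.smul_sum]
    exact congrArg _ (derivComp_update_removeNth D f y p q _ (Fin.succAbove_pred_of_lt p q hpq))
  · rw [Finset.sum_const_zero]

theorem ceDiffBr_derivComp (D : LieDerivation k L L) (n : ℕ) (f : AlternatingMap k L M (Fin n))
    (y : Fin (n + 1) → L) :
    ceDiffBr n (AlternatingMap.derivComp (D : L →ₗ[k] L) f) y =
      ∑ i, ceDiffBr n f (update y i (D (y i))) := by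
  simp only [ceDiffBr, ceDiffBrTerm_derivComp]
  symm
  rw [Finset.sum_comm]
  exact Finset.sum_congr rfl fun p _ => Finset.sum_comm

variable [LieRingModule L M]

noncomputable def ceDiffAct (n : ℕ) (f : AlternatingMap k L M (Fin n)) (x : Fin (n + 1) → L) :
    M :=
  ∑ i : Fin (n + 1), ((-1 : ℤ) ^ (i : ℕ)) • ⁅x i, f fun j => x (i.succAbove j)⁆

theorem ceDiffFun_eq_add (n : ℕ) (f : AlternatingMap k L M (Fin n)) (x : Fin (n + 1) → L) :
    ceDiffFun k L M n f x = ceDiffAct n f x + ceDiffBr n f x :=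
  rfl

theorem ceDiffAct_cons (n : ℕ) (f : AlternatingMap k L M (Fin (n + 1))) (x₀ : L)
    (y : Fin (n + 1) → L) :
    ceDiffAct (n + 1) f (Fin.cons x₀ y) = ⁅x₀, f y⁆ - ceDiffAct n (f.curryLeft x₀) y := by
  simp [ceDiffAct, Fin.sum_univ_succ (n := n + 1), pow_succ, sub_eq_add_neg,
    Fin.cons_succ_succAbove, Matrix.vecCons]

theorem ceDiffAct_derivComp (D : LieDerivation k L L) (hD : ∀ (z : L) (m : M), ⁅D z, m⁆ = 0)
    (n : ℕ) (f : AlternatingMap k L M (Fin n)) (y : Fin (n + 1) → L) :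
    ceDiffAct n (AlternatingMap.derivComp (D : L →ₗ[k] L) f) y =
      ∑ i, ceDiffAct n f (update y i (D (y i))) := by
  simp only [ceDiffAct]
  rw [Finset.sum_comm]
  refine Finset.sum_congr rfl fun j _ => ?_
  rw [Fin.sum_univ_succAbove _ j, update_self, hD, smul_zero, zero_add,
    AlternatingMap.derivComp_apply, lie_sum, Finset.smul_sum]
  refine Finset.sum_congr rfl fun r _ => ?_
  rw [update_of_ne (Fin.ne_succAbove j r), LieDerivation.coeFn_coe]
  exact congrArg (fun w => _ • ⁅y j, f w⁆) (Fin.removeNth_update_succAbove j r _ y).symm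

theorem ceDiffFun_derivComp (D : LieDerivation k L L) (hD : ∀ (z : L) (m : M), ⁅D z, m⁆ = 0)
    (n : ℕ) (f : AlternatingMap k L M (Fin n)) (y : Fin (n + 1) → L) :
    ceDiffFun k L M n (AlternatingMap.derivComp (D : L →ₗ[k] L) f) y =
      ∑ i, ceDiffFun k L M n f (update y i (D (y i))) := by
  simp only [ceDiffFun_eq_add, ceDiffAct_derivComp D hD, ceDiffBr_derivComp,
    Finset.sum_add_distrib]

theorem ceDiffFun_curryLeft_add_cons (n : ℕ) (f : AlternatingMap k L M (Fin (n + 1))) (x₀ : L)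
    (y : Fin (n + 1) → L) :
    ceDiffFun k L M n (f.curryLeft x₀) y + ceDiffFun k L M (n + 1) f (Fin.cons x₀ y) =
      ⁅x₀, f y⁆ - AlternatingMap.derivComp (LieAlgebra.ad k L x₀) f y := by
  rw [ceDiffFun_eq_add, ceDiffFun_eq_add, ceDiffAct_cons, ceDiffBr_cons]
  abel

variable [LieModule k L M]

theorem derivComp_mem_ceZ (D : LieDerivation k L L) (hD : ∀ (z : L) (m : M), ⁅D z, m⁆ = 0)
    {n : ℕ} {f : AlternatingMap k L M (Fin n)} (hf : f ∈ ceZ k L M n) :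
    AlternatingMap.derivComp (D : L →ₗ[k] L) f ∈ ceZ k L M n := fun y => by
  rw [ceDiffFun_derivComp D hD]
  exact Finset.sum_eq_zero fun i _ => hf _

theorem compAlternatingMap_toEnd_sub_derivComp_mem_ceB (x₀ : L) {n : ℕ}
    {f : AlternatingMap k L M (Fin n)} (hf : f ∈ ceZ k L M n) :
    (LieModule.toEnd k L M x₀).compAlternatingMap f -
      AlternatingMap.derivComp (LieAlgebra.ad k L x₀) f ∈ ceB k L M n := by
  cases n with
  | zero =>
    refine (Submodule.mem_bot k).mpr (AlternatingMap.ext fun y => ?_)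
    simpa [ceDiffFun, AlternatingMap.derivComp_apply] using hf (Fin.cons x₀ y)
  | succ n =>
    refine ⟨f.curryLeft x₀, fun y => ?_⟩
    rw [← add_zero (ceDiffFun k L M n _ y), ← hf (Fin.cons x₀ y), ceDiffFun_curryLeft_add_cons]
    rfl

end Cochains

theorem cohomology_vanishes_for_nontrivial_character_general
    (k 𝓛 M : Type*) [Field k] [LieRing 𝓛] [LieAlgebra k 𝓛]
    (hnil : LieRing.IsNilpotent 𝓛)
    [AddCommGroup M] [Module k M] [LieRingModule 𝓛 M] [LieModule k 𝓛 M]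
    (χ : 𝓛 →ₗ[k] k) (hχcomm : ∀ x y : 𝓛, χ ⁅x, y⁆ = 0) (hχ : χ ≠ 0)
    (haction : ∀ (x : 𝓛) (m : M), ⁅x, m⁆ = χ x • m)
    (i : ℕ) :
    Subsingleton (ceH k 𝓛 M i) := by
  obtain ⟨x₀, hx₀⟩ : ∃ x, χ x ≠ 0 := by
    by_contra! h
    exact hχ (LinearMap.ext h)
  have had : IsNilpotent (LieAlgebra.ad k 𝓛 x₀) := by
    obtain ⟨N, hN⟩ := LieAlgebra.nilpotent_ad_of_nilpotent_algebra k 𝓛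
    exact ⟨N, hN x₀⟩
  have hD : ∀ (z : 𝓛) (m : M), ⁅LieDerivation.ad k 𝓛 x₀ z, m⁆ = 0 := by
    simp [haction, hχcomm]
  refine Submodule.Quotient.subsingleton_iff.mpr (Submodule.comap_subtype_eq_top.mpr ?_)
  refine Submodule.le_of_isNilpotent_of_smul_sub_mem hx₀.isUnit
    (AlternatingMap.isNilpotent_derivComp had) (fun f hf => ?_) (fun f hf => ?_)
  · simpa using derivComp_mem_ceZ (LieDerivation.ad k 𝓛 x₀) hD hf
  · convert compAlternatingMap_toEnd_sub_derivComp_mem_ceB x₀ hf using 2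
    ext
    simp [haction]

/-- Let `𝓛` be a finite-dimensional nilpotent Lie algebra over a field `k` and
`M` a one-dimensional `𝓛`-module given by a nonzero character `χ : 𝓛 → k` (vanishing on
commutators).  Then the Lie algebra cohomology `H^i(𝓛, M)` vanishes for all `i ≥ 0`. -/
theorem cohomology_vanishes_for_nontrivial_character
    (k 𝓛 M : Type*) [Field k] [LieRing 𝓛] [LieAlgebra k 𝓛] [FiniteDimensional k 𝓛]
    (hnil : LieRing.IsNilpotent 𝓛)
    [AddCommGroup M] [Module k M] [LieRingModule 𝓛 M] [LieModule k 𝓛 M]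
    (χ : 𝓛 →ₗ[k] k) (hχcomm : ∀ x y : 𝓛, χ ⁅x, y⁆ = 0) (hχ : χ ≠ 0)
    (hdim : Module.finrank k M = 1)
    (haction : ∀ (x : 𝓛) (m : M), ⁅x, m⁆ = χ x • m)
    (i : ℕ) :
    Subsingleton (ceH k 𝓛 M i) :=
  cohomology_vanishes_for_nontrivial_character_general k 𝓛 M hnil χ hχcomm hχ haction i
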